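/- Let V be a grading-restricted vertex algebra, u, v ∈ V with v homogeneous, k ∈ ℕ and l, p, n ∈ ℤ such that k ≥ 1 and l + p ≥ 1. Let w ∈ V be the element with w := ∑_{j∈ℕ, n+p−j≥0} (−1)^j C(p,j) ∑_{m=0}^{n+p−j} C(−k+n−j−l−1, m) Res_x (1+x)^{l+p} Y((1+x)^{L(0)} v, x) u / x^{k−n+j+l+m+1} − ∑_{j∈ℕ, l−n+k+p−j≥0} (−1)^{p−j} ∑_{m=0}^{l−n+k+p−j} C(−n−j−1, m) Res_x (1+x)^{l+p} Y((1+x)^{L(0)} u, x) v / x^{n+j+m+1} − ∑_{j∈ℕ} C(wt v + n − k − 1, j) v_{p+j} u, so that [w]_{k,l+p} is the corresponding generator of J^∞(V) and lies in Q^∞(V). Then [w]_{k−1,l+p−1} ∈ Q^∞(V); in particular, these generators of J^∞(V) satisfy the diagonal shift property. -/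

import Mathlib

noncomputable section

open scoped BigOperators

/-- The generalized binomial coefficient `C(m, k)` for `m : ℤ`, as a complex number. -/
def cchoose (m : ℤ) (k : ℕ) : ℂ :=
  (∏ i ∈ Finset.range k, ((m : ℂ) - (i : ℂ))) / (k.factorial : ℂ)

/-- A grading-restricted vertex algebra structure on a complex vector space `V`,
presented via the projections `proj n` onto the weight spaces `V_(n)` and the
modes `mode u n = u_n` of the vertex operator `Y(u,x) = ∑ u_n x^{-n-1}`. -/
structure GRVertexAlgebra (V : Type) [AddCommGroup V] [Module ℂ V] : Type where
  /-- projection onto the weight-`n` subspace `V_(n)` -/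
  proj : ℤ → V →ₗ[ℂ] V
  /-- `mode u n v = u_n v` -/
  mode : V → ℤ → V → V
  /-- the vacuum vector `𝟙` -/
  one : V
  mode_add_left : ∀ (u u' : V) (n : ℤ) (v : V),
    mode (u + u') n v = mode u n v + mode u' n v
  mode_smul_left : ∀ (c : ℂ) (u : V) (n : ℤ) (v : V),
    mode (c • u) n v = c • mode u n v
  mode_add_right : ∀ (u : V) (n : ℤ) (v v' : V),
    mode u n (v + v') = mode u n v + mode u n v'
  mode_smul_right : ∀ (u : V) (n : ℤ) (c : ℂ) (v : V),
    mode u n (c • v) = c • mode u n v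
  proj_idem : ∀ (m n : ℤ) (v : V), proj m (proj n v) = if m = n then proj n v else 0
  proj_support_finite : ∀ v : V, (Function.support fun n : ℤ => proj n v).Finite
  proj_sum : ∀ v : V, (∑ᶠ n : ℤ, proj n v) = v
  /-- each weight space is finite dimensional -/
  grading_finite_dim : ∀ n : ℤ, FiniteDimensional ℂ (LinearMap.range (proj n))
  /-- the grading is bounded below -/
  grading_bounded_below : ∃ N : ℤ, ∀ n : ℤ, n < N → proj n = 0
  /-- lower truncation: `u_n v = 0` for `n` sufficiently large -/
  lower_trunc : ∀ u v : V, ∃ N : ℤ, ∀ n : ℤ, N ≤ n → mode u n v = 0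
  /-- the vacuum is homogeneous of weight `0` -/
  one_homogeneous : proj 0 one = one
  /-- identity property `Y(𝟙,x) = 1` -/
  identity_prop : ∀ (n : ℤ) (v : V), mode one n v = if n = -1 then v else 0
  /-- creation property, regular part -/
  creation : ∀ (u : V) (n : ℤ), 0 ≤ n → mode u n one = 0
  /-- creation property, constant term: `lim_{x→0} Y(u,x)𝟙 = u` -/
  creation_limit : ∀ u : V, mode u (-1) one = u
  /-- the Jacobi identity, in terms of modes -/
  jacobi : ∀ (a b c : V) (l m n : ℤ),
      (∑ᶠ i : ℕ, cchoose m i • mode (mode a (l + i) b) (m + n - i) c)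
    = (∑ᶠ i : ℕ, ((-1 : ℂ) ^ (i : ℕ) * cchoose l i) • mode a (m + l - i) (mode b (n + i) c))
      - (∑ᶠ i : ℕ, ((-1 : ℂ) ^ (l + i : ℤ) * cchoose l i) •
          mode b (n + l - i) (mode a (m + i) c))
  /-- `L(0)`-bracket formula, where `L(0) v = ∑ n • proj n v` -/
  L0_bracket : ∀ (a v : V) (n : ℤ),
      (∑ᶠ m : ℤ, (m : ℂ) • proj m (mode a n v)) - mode a n (∑ᶠ m : ℤ, (m : ℂ) • proj m v)
    = mode (∑ᶠ m : ℤ, (m : ℂ) • proj m a) n v + (-(n : ℂ) - 1) • mode a n v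
  /-- `L(-1)`-derivative formula, where `L(-1) u = u_{-2} 𝟙`:
  `Y(L(-1)u, x) = (d/dx) Y(u,x)` -/
  Lneg1_deriv : ∀ (u v : V) (n : ℤ),
      mode (mode u (-2) one) n v = (-(n : ℂ)) • mode u (n - 1) v
  /-- `L(-1)`-bracket formula: `[L(-1), Y(u,x)] = Y(L(-1)u, x)` -/
  Lneg1_bracket : ∀ (u v : V) (n : ℤ),
      mode (mode u n v) (-2) one - mode u n (mode v (-2) one)
    = mode (mode u (-2) one) n v

namespace GRVertexAlgebra

variable {V : Type} [AddCommGroup V] [Module ℂ V]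

/-- The operator `L(0)`. -/
def L0op (VA : GRVertexAlgebra V) (v : V) : V := ∑ᶠ m : ℤ, (m : ℂ) • VA.proj m v

/-- The operator `L(-1)`. -/
def Lneg1op (VA : GRVertexAlgebra V) (v : V) : V := VA.mode v (-2) VA.one

/-- `u` is homogeneous (of some weight). -/
def Homogeneous (VA : GRVertexAlgebra V) (u : V) : Prop := ∃ w : ℤ, VA.proj w u = u

lemma mode_zero_left (VA : GRVertexAlgebra V) (n : ℤ) (v : V) : VA.mode 0 n v = 0 := by
  simpa using VA.mode_smul_left 0 0 n v

lemma mode_zero_right (VA : GRVertexAlgebra V) (u : V) (n : ℤ) : VA.mode u n 0 = 0 := by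
  simpa using VA.mode_smul_right u n 0 0

/-- `Res_x x^N (1+x)^{l + L(0)-weight} Y(u, x) v`, i.e. the residue
`Res_x x^N (1+x)^l Y((1+x)^{L(0)} u, x) v`, expressed in terms of modes and the
homogeneous components of `u`. -/
def resPow (VA : GRVertexAlgebra V) (N l : ℤ) (u v : V) : V :=
  ∑ᶠ m : ℤ, ∑ᶠ i : ℕ, cchoose (l + m) i • VA.mode (VA.proj m u) (N + i) v

end GRVertexAlgebra

section UInf

variable (V : Type) [AddCommGroup V] [Module ℂ V]

/-- The space of column-finite `ℕ × ℕ` matrices with entries in `V`, as a submodule of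
the space of all doubly indexed families. -/
def UInfSub : Submodule ℂ (ℕ → ℕ → V) where
  carrier := {A | ∀ l : ℕ, (Function.support fun k => A k l).Finite}
  add_mem' := by
    intro A B hA hB l
    refine Set.Finite.subset ((hA l).union (hB l)) ?_
    intro k hk
    by_contra h
    simp only [Set.mem_union, Function.mem_support, not_or, not_not] at h
    exact hk (by simp [Pi.add_apply, h.1, h.2])
  zero_mem' := by
    intro l
    simp [Function.support]
  smul_mem' := by
    intro c A hA l
    refine Set.Finite.subset (hA l) ?_
    intro k hk
    by_contra h
    simp only [Function.mem_support, not_not] at h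
    exact hk (by simp [Pi.smul_apply, h])

/-- `U^∞(V)`: column-finite `ℕ × ℕ` matrices with entries in `V`. -/
def UInf : Type := ↥(UInfSub V)

instance : AddCommGroup (UInf V) := by unfold UInf; infer_instance
instance : Module ℂ (UInf V) := by unfold UInf; infer_instance

end UInf

namespace GRVertexAlgebra

variable {V : Type} [AddCommGroup V] [Module ℂ V]

/-- `[v]_{kl} = v ⊗ E_{kl}`, the matrix with entry `v` in position `(k,l)` and `0` elsewhere. -/
def Usingle (v : V) (k l : ℕ) : UInf V :=
  ⟨fun k' l' => if k' = k ∧ l' = l then v else 0, by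
    intro l'
    refine Set.Finite.subset (Set.finite_singleton k) ?_
    intro k' hk'
    simp only [Function.mem_support] at hk'
    by_contra h
    simp only [Set.mem_singleton_iff] at h
    exact hk' (by simp [h])⟩

/-- The `(k,l)` entry of the product `[u]_{kn} ⋄ [v]_{nl}`:
`∑_{m=0}^{n} C(-k+n-l-1, m) Res_x x^{-k+n-l-m-1} (1+x)^l Y((1+x)^{L(0)} u, x) v`. -/
def diamondEntry (VA : GRVertexAlgebra V) (u v : V) (k n l : ℕ) : V :=
  ∑ m ∈ Finset.range (n + 1),
    cchoose (-(k : ℤ) + n - l - 1) m • VA.resPow (-(k : ℤ) + n - l - m - 1) l u v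

lemma resPow_zero_left (VA : GRVertexAlgebra V) (N l : ℤ) (v : V) :
    VA.resPow N l 0 v = 0 := by
  unfold GRVertexAlgebra.resPow
  have h : ∀ m : ℤ, (∑ᶠ i : ℕ, cchoose (l + m) i • VA.mode (VA.proj m (0 : V)) (N + i) v) = 0 := by
    intro m
    have : ∀ i : ℕ, cchoose (l + m) i • VA.mode (VA.proj m (0 : V)) (N + i) v = 0 := by
      intro i
      rw [map_zero, VA.mode_zero_left]
      simp
    simp only [this]
    exact finsum_zero
  simp only [h]
  exact finsum_zero

lemma resPow_zero_right (VA : GRVertexAlgebra V) (N l : ℤ) (u : V) :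
    VA.resPow N l u 0 = 0 := by
  unfold GRVertexAlgebra.resPow
  have h : ∀ m : ℤ, (∑ᶠ i : ℕ, cchoose (l + m) i • VA.mode (VA.proj m u) (N + i) (0 : V)) = 0 := by
    intro m
    have : ∀ i : ℕ, cchoose (l + m) i • VA.mode (VA.proj m u) (N + i) (0 : V) = 0 := by
      intro i
      rw [VA.mode_zero_right]
      simp
    simp only [this]
    exact finsum_zero
  simp only [h]
  exact finsum_zero

lemma diamondEntry_zero_left (VA : GRVertexAlgebra V) (v : V) (k n l : ℕ) :
    VA.diamondEntry 0 v k n l = 0 := by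
  unfold GRVertexAlgebra.diamondEntry
  simp [VA.resPow_zero_left]

lemma diamondEntry_zero_right (VA : GRVertexAlgebra V) (u : V) (k n l : ℕ) :
    VA.diamondEntry u 0 k n l = 0 := by
  unfold GRVertexAlgebra.diamondEntry
  simp [VA.resPow_zero_right]

/-- The product `⋄` on `U^∞(V)`. -/
def udiamond (VA : GRVertexAlgebra V) (A B : UInf V) : UInf V :=
  ⟨fun k l => ∑ᶠ n : ℕ, VA.diamondEntry (A.1 k n) (B.1 n l) k n l, by
    intro l
    refine Set.Finite.subset
      (Set.Finite.biUnion (B.2 l) (fun n _ => A.2 n)) ?_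
    intro k hk
    simp only [Function.mem_support] at hk
    by_contra h
    apply hk
    have hterm : ∀ n : ℕ, VA.diamondEntry (A.1 k n) (B.1 n l) k n l = 0 := by
      intro n
      by_cases hB : B.1 n l = 0
      · rw [hB]; exact VA.diamondEntry_zero_right _ _ _ _
      · have hA : A.1 k n = 0 := by
          by_contra hA
          exact h (Set.mem_biUnion (by exact hB) (by exact hA))
        rw [hA]; exact VA.diamondEntry_zero_left _ _ _ _
    simp only [hterm]
    exact finsum_zero⟩

end GRVertexAlgebra
/-- A lower-bounded generalized module for a grading-restricted vertex algebra,
presented via the mode action `wmode`, the projections `wproj μ` onto the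
(generalized-eigenvalue) weight spaces `W_(μ)`, and the operators `L_W(0)`, `L_W(-1)`. -/
structure LBGModule {V : Type} [AddCommGroup V] [Module ℂ V]
    (VA : GRVertexAlgebra V) (W : Type) [AddCommGroup W] [Module ℂ W] : Type where
  /-- `wmode u n w = u_n w`, the modes of `Y_W(u,x) = ∑ u_n x^{-n-1}` -/
  wmode : V → ℤ → W → W
  /-- projection onto the weight-`μ` subspace `W_(μ)` -/
  wproj : ℂ → W →ₗ[ℂ] W
  /-- the operator `L_W(0)` -/
  LW0 : W →ₗ[ℂ] W
  /-- the operator `L_W(-1)` -/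
  LW1 : W →ₗ[ℂ] W
  wmode_add_left : ∀ (u u' : V) (n : ℤ) (w : W),
    wmode (u + u') n w = wmode u n w + wmode u' n w
  wmode_smul_left : ∀ (c : ℂ) (u : V) (n : ℤ) (w : W),
    wmode (c • u) n w = c • wmode u n w
  wmode_add_right : ∀ (u : V) (n : ℤ) (w w' : W),
    wmode u n (w + w') = wmode u n w + wmode u n w'
  wmode_smul_right : ∀ (u : V) (n : ℤ) (c : ℂ) (w : W),
    wmode u n (c • w) = c • wmode u n w
  wproj_idem : ∀ (μ ν : ℂ) (w : W), wproj μ (wproj ν w) = if μ = ν then wproj ν w else 0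
  wproj_support_finite : ∀ w : W, (Function.support fun μ : ℂ => wproj μ w).Finite
  wproj_sum : ∀ w : W, (∑ᶠ μ : ℂ, wproj μ w) = w
  /-- the grading is bounded below in real part -/
  grading_bounded_below : ∃ B : ℝ, ∀ μ : ℂ, μ.re < B → wproj μ = 0
  /-- lower truncation -/
  lower_trunc : ∀ (u : V) (w : W), ∃ N : ℤ, ∀ n : ℤ, N ≤ n → wmode u n w = 0
  /-- identity property `Y_W(𝟙,x) = 1` -/
  identity_prop : ∀ (n : ℤ) (w : W), wmode VA.one n w = if n = -1 then w else 0
  /-- the Jacobi identity for the module -/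
  jacobi : ∀ (a b : V) (w : W) (l m n : ℤ),
      (∑ᶠ i : ℕ, cchoose m i • wmode (VA.mode a (l + i) b) (m + n - i) w)
    = (∑ᶠ i : ℕ, ((-1 : ℂ) ^ (i : ℕ) * cchoose l i) • wmode a (m + l - i) (wmode b (n + i) w))
      - (∑ᶠ i : ℕ, ((-1 : ℂ) ^ (l + i : ℤ) * cchoose l i) •
          wmode b (n + l - i) (wmode a (m + i) w))
  /-- `W_(μ)` is the generalized eigenspace of `L_W(0)` with eigenvalue `μ` -/
  gen_eigenspace : ∀ (μ : ℂ) (w : W),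
    ∃ k : ℕ, (((LW0 - μ • LinearMap.id : Module.End ℂ W) ^ k) : W →ₗ[ℂ] W) (wproj μ w) = 0
  gen_eigenspace_mem : ∀ (μ : ℂ) (w : W),
    (∃ k : ℕ, (((LW0 - μ • LinearMap.id : Module.End ℂ W) ^ k) : W →ₗ[ℂ] W) w = 0) → wproj μ w = w
  /-- `L_W(0)`-bracket formula -/
  LW0_bracket : ∀ (a : V) (w : W) (n : ℤ),
      LW0 (wmode a n w) - wmode a n (LW0 w)
    = wmode (∑ᶠ m : ℤ, (m : ℂ) • VA.proj m a) n w + (-(n : ℂ) - 1) • wmode a n w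
  /-- `L_W(-1)`-derivative formula: `Y_W(L(-1)u, x) = (d/dx) Y_W(u,x)` -/
  LW1_deriv : ∀ (u : V) (w : W) (n : ℤ),
      wmode (VA.mode u (-2) VA.one) n w = (-(n : ℂ)) • wmode u (n - 1) w
  /-- `L_W(-1)`-bracket formula -/
  LW1_bracket : ∀ (u : V) (w : W) (n : ℤ),
      LW1 (wmode u n w) - wmode u n (LW1 w) = wmode (VA.mode u (-2) VA.one) n w

namespace LBGModule

variable {V : Type} [AddCommGroup V] [Module ℂ V] {VA : GRVertexAlgebra V}
variable {W : Type} [AddCommGroup W] [Module ℂ W]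

lemma wmode_zero_left (M : LBGModule VA W) (n : ℤ) (w : W) : M.wmode 0 n w = 0 := by
  simpa using M.wmode_smul_left 0 0 n w

lemma wmode_zero_right (M : LBGModule VA W) (u : V) (n : ℤ) : M.wmode u n 0 = 0 := by
  simpa using M.wmode_smul_right u n 0 0

/-- `Ω_n(W) = {w ∈ W : v_k w = 0 for homogeneous v with wt v - k - 1 < -n}`
(for `n < 0` this is automatically `{0}`, matching `Ω_{-1}(W) = 0`). -/
def OmegaSet (M : LBGModule VA W) (n : ℤ) : Set W :=
  {w : W | ∀ (m k : ℤ) (v : V), m - k - 1 < -n → M.wmode (VA.proj m v) k w = 0}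

/-- `ϑ_{Gr(W)}([v]_{kl})` applied to a representative `w`:
`Res_x x^{l-k-1} Y_W(x^{L(0)} v, x) w`. -/
def wAct (M : LBGModule VA W) (v : V) (k l : ℕ) (w : W) : W :=
  ∑ᶠ m : ℤ, M.wmode (VA.proj m v) ((l : ℤ) - (k : ℤ) - 1 + m) w

end LBGModule

namespace GRVertexAlgebra

variable {V : Type} [AddCommGroup V] [Module ℂ V]

/-- Membership in `Q^∞(V)`: `A` acts as zero on `Gr(W)` for every lower-bounded
generalized `V`-module `W`.  Here the action of `A` on `[w]_n ∈ Gr_n(W)` has component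
`[ϑ([A_{kn}]_{kn}) w]_k` in `Gr_k(W)`, which vanishes in `Gr_k(W) = Ω_k(W)/Ω_{k-1}(W)`
exactly when the representative lies in `Ω_{k-1}(W)`. -/
def memQ (VA : GRVertexAlgebra V) (A : UInf V) : Prop :=
  ∀ (W : Type) (_ : AddCommGroup W) (_ : Module ℂ W) (M : LBGModule VA W)
    (n k : ℕ) (w : W), w ∈ M.OmegaSet n →
      M.wAct (A.1 k n) k n w ∈ M.OmegaSet ((k : ℤ) - 1)

/-- The generators of `O^∞_∘(V)` living in position `(k,l)`:
`Res_x x^{-k-l-p-2} (1+x)^l Y((1+x)^{L(0)} u, x) v`. -/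
def circExpr (VA : GRVertexAlgebra V) (u v : V) (k l p : ℕ) : V :=
  VA.resPow (-(k : ℤ) - l - p - 2) l u v

/-- Membership in `O^∞_∘(V)`: each entry of `A` is a (finite) linear combination of the
generators `Res_x x^{-k-l-p-2} (1+x)^l [Y((1+x)^{L(0)} u, x) v]_{kl}`; since each generator
is concentrated in a single position `(k,l)`, an infinite linear combination in which each
pair `(k,l)` appears only finitely many times is exactly a column-finite matrix each of whose
entries lies in the corresponding span. -/
def memOcirc (VA : GRVertexAlgebra V) (A : UInf V) : Prop :=
  ∀ k l : ℕ, A.1 k l ∈ Submodule.span ℂ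
    {x : V | ∃ (u v : V) (p : ℕ), x = VA.circExpr u v k l p}

/-- The element `(L(-1) + L(0) + l - k) v`. -/
def LLExpr (VA : GRVertexAlgebra V) (k l : ℕ) (v : V) : V :=
  VA.Lneg1op v + VA.L0op v + (((l : ℂ) - (k : ℂ)) • v)

/-- Membership in `O^∞(V)`. -/
def memO (VA : GRVertexAlgebra V) (A : UInf V) : Prop :=
  ∀ k l : ℕ, A.1 k l ∈ Submodule.span ℂ
    ({x : V | ∃ (u v : V) (p : ℕ), x = VA.circExpr u v k l p}
      ∪ {x : V | ∃ v : V, x = VA.LLExpr k l v})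

end GRVertexAlgebra
namespace GRVertexAlgebra

variable {V : Type} [AddCommGroup V] [Module ℂ V]

/-- Huang's Jacobi-identity element of `U^∞(V)` attached to `u, v ∈ V` with `v`
homogeneous of weight `wtv`, and integers `k ∈ ℕ`, `l, p, n ∈ ℤ` with `l + p ∈ ℕ`:
`∑_{j, n+p-j ≥ 0} (-1)^j C(p,j) [v]_{k,n+p-j} ⋄ [u]_{n+p-j,l+p}`
`- ∑_{j, l-n+k+p-j ≥ 0} (-1)^{p-j} C(p,j) [u]_{k,l-n+k+p-j} ⋄ [v]_{l-n+k+p-j,l+p}`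
`- ∑_{j ∈ ℕ} C(wt v + n - k - 1, j) [v_{p+j} u]_{k,l+p}`. -/
def jElt (VA : GRVertexAlgebra V) (u v : V) (wtv : ℤ) (k : ℕ) (l p n : ℤ) : UInf V :=
  (∑ᶠ j : ℕ, if (j : ℤ) ≤ n + p then
      ((-1 : ℂ) ^ (j : ℕ) * cchoose p j) •
        VA.udiamond (Usingle v k (n + p - j).toNat)
          (Usingle u (n + p - j).toNat (l + p).toNat)
    else 0)
  - (∑ᶠ j : ℕ, if (j : ℤ) ≤ l - n + (k : ℤ) + p then
      ((-1 : ℂ) ^ ((p : ℤ) - (j : ℤ)) * cchoose p j) •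
        VA.udiamond (Usingle u k (l - n + (k : ℤ) + p - j).toNat)
          (Usingle v (l - n + (k : ℤ) + p - j).toNat (l + p).toNat)
    else 0)
  - Usingle (∑ᶠ j : ℕ, cchoose (wtv + n - (k : ℤ) - 1) j • VA.mode v (p + j) u)
      k (l + p).toNat

/-- The `(k, l+p)` entry of the Jacobi-identity element `jElt`, written out in terms of
residues as in the paper. -/
def jEntry (VA : GRVertexAlgebra V) (u v : V) (wtv : ℤ) (k : ℕ) (l p n : ℤ) : V :=
  (∑ᶠ j : ℕ, if (j : ℤ) ≤ n + p then
      ((-1 : ℂ) ^ (j : ℕ) * cchoose p j) •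
        VA.diamondEntry v u k (n + p - j).toNat (l + p).toNat
    else 0)
  - (∑ᶠ j : ℕ, if (j : ℤ) ≤ l - n + (k : ℤ) + p then
      ((-1 : ℂ) ^ ((p : ℤ) - (j : ℤ)) * cchoose p j) •
        VA.diamondEntry u v k (l - n + (k : ℤ) + p - j).toNat (l + p).toNat
    else 0)
  - (∑ᶠ j : ℕ, cchoose (wtv + n - (k : ℤ) - 1) j • VA.mode v (p + j) u)

/-- The set of generating elements of `J^∞(V)`. -/
def JSet (VA : GRVertexAlgebra V) : Set (UInf V) :=
  {A : UInf V | ∃ (u v : V) (wtv : ℤ) (k : ℕ) (l p n : ℤ),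
    VA.proj wtv v = v ∧ 0 ≤ l + p ∧ A = VA.jElt u v wtv k l p n}

/-- The set `O^∞(V)` of Huang, as a subset of `U^∞(V)`. -/
def OSet (VA : GRVertexAlgebra V) : Set (UInf V) := {A : UInf V | VA.memO A}

end GRVertexAlgebra

/-- A vertex operator algebra: a grading-restricted vertex algebra together with a
conformal vector `ω` whose modes `L(n) = ω_{n+1}` give a representation of the Virasoro
algebra, recover the grading operator `L(0)`, and satisfy the `L(-1)`-property. -/
structure VertexOperatorAlgebra (V : Type) [AddCommGroup V] [Module ℂ V]
    extends GRVertexAlgebra V : Type where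
  /-- the conformal vector -/
  omega : V
  /-- the central charge -/
  centralCharge : ℂ
  /-- the Virasoro relations for `L(n) = ω_{n+1}` -/
  virasoro : ∀ (m n : ℤ) (v : V),
      mode omega (m + 1) (mode omega (n + 1) v) - mode omega (n + 1) (mode omega (m + 1) v)
    = ((m : ℂ) - (n : ℂ)) • mode omega (m + n + 1) v
      + (if m + n = 0 then (((m ^ 3 - m : ℤ) : ℂ) / 12) * centralCharge else 0) • v
  /-- `L(0) = ω_1` is the grading operator -/
  omega_L0 : ∀ v : V, mode omega 1 v = ∑ᶠ m : ℤ, (m : ℂ) • proj m v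
  /-- `L(-1) = ω_0` -/
  omega_Lneg1 : ∀ v : V, mode omega 0 v = mode v (-2) one

namespace GRVertexAlgebra

variable {V : Type} [AddCommGroup V] [Module ℂ V]

/-- The circle product `u ∘_n v = Res_x (1+x)^{wt u + n} Y(u,x) v / x^{2n+2}`
(for `u` homogeneous; `resPow` inserts the weight of each homogeneous component). -/
def circN (VA : GRVertexAlgebra V) (n : ℕ) (u v : V) : V :=
  VA.resPow (-(2 * (n : ℤ)) - 2) n u v

/-- The subspace `O_n(V)`, spanned by the `u ∘_n v` for homogeneous `u` and all `v`, and
by the `(L(-1) + L(0)) v`. -/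
def ZhuO (VA : GRVertexAlgebra V) (n : ℕ) : Submodule ℂ V :=
  Submodule.span ℂ
    ({x : V | ∃ u v : V, VA.Homogeneous u ∧ x = VA.circN n u v}
      ∪ {x : V | ∃ v : V, x = VA.Lneg1op v + VA.L0op v})

/-- The product `u *_n v` of Dong–Li–Mason (for `u` homogeneous, extended linearly):
`∑_{m=0}^{n} (-1)^m C(m+n, n) Res_x (1+x)^{wt u + n} Y(u,x) v / x^{n+m+1}`. -/
def starN (VA : GRVertexAlgebra V) (n : ℕ) (u v : V) : V :=
  ∑ m ∈ Finset.range (n + 1),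
    ((-1 : ℂ) ^ (m : ℕ) * ((m + n).choose n : ℂ)) •
      VA.resPow (-(n : ℤ) - m - 1) n u v

end GRVertexAlgebra

/-- The monomial `α(-i_1) ⋯ α(-i_j) 𝟙` of the rank one Heisenberg vertex operator algebra,
indexed by the multiset `{i_1, …, i_j}` of positive integers; here `a = α(-1)𝟙` so that
`α(m) = a_m`. -/
def heisMono {V : Type} [AddCommGroup V] [Module ℂ V]
    (VA : GRVertexAlgebra V) (a : V) (μ : Multiset ℕ+) : V :=
  (μ.sort (· ≤ ·)).foldr (fun i v => VA.mode a (-(i : ℤ)) v) VA.one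

/-- The rank one Heisenberg vertex operator algebra `M(1)`: a vertex operator algebra
with a weight-one element `a = α(-1)𝟙` whose modes `α(m) = a_m` satisfy the rank one
Heisenberg relations (with the central element acting as `1`), such that the monomials
`α(-i_1) ⋯ α(-i_j) 𝟙` form a basis, and with conformal vector `ω = (1/2) α(-1)² 𝟙`
of central charge `1`. -/
structure HeisenbergVOA (V : Type) [AddCommGroup V] [Module ℂ V]
    extends VertexOperatorAlgebra V : Type where
  /-- the element `a = α(-1)𝟙` -/
  a : V
  /-- `α(-1)𝟙` is homogeneous of weight one -/
  a_wt : proj 1 a = a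
  /-- the Heisenberg commutation relations `[α(m), α(n)] = m δ_{m+n,0}` (`c` acts as `1`) -/
  heis_comm : ∀ (m n : ℤ) (v : V),
      mode a m (mode a n v) - mode a n (mode a m v)
    = if m + n = 0 then (m : ℂ) • v else 0
  /-- `M(1) ≃ S(ĥ⁻)` linearly: the monomials `α(-i_1)⋯α(-i_j)𝟙` form a basis -/
  basis : Module.Basis (Multiset ℕ+) ℂ V
  basis_eq : ∀ μ : Multiset ℕ+, basis μ = heisMono toGRVertexAlgebra a μ
  omega_eq : omega = (1 / 2 : ℂ) • mode a (-1) a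
  centralCharge_eq : centralCharge = 1

namespace HeisenbergVOA

variable {V : Type} [AddCommGroup V] [Module ℂ V]

/-- The element
`D_n = [α(-1)𝟙]_{nn} ⋄ [α(-1)𝟙]_{nn} - [α(-1)²𝟙]_{nn} + 2n [𝟙]_{nn}` of `U^∞(M(1))`. -/
def Delt (H : HeisenbergVOA V) (n : ℕ) : UInf V :=
  H.udiamond (GRVertexAlgebra.Usingle H.a n n) (GRVertexAlgebra.Usingle H.a n n)
    - GRVertexAlgebra.Usingle (H.mode H.a (-1) H.a) n n
    + (2 * (n : ℂ)) • GRVertexAlgebra.Usingle H.one n n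

end HeisenbergVOA

namespace LBGModule

variable {V : Type} [AddCommGroup V] [Module ℂ V]
variable {W : Type} [AddCommGroup W] [Module ℂ W]

/-- `Ω(W) = {w ∈ W : α(n) w = 0 for all n > 0}` for a module `W` over the rank one
Heisenberg vertex operator algebra. -/
def smallOmega (H : HeisenbergVOA V) (M : LBGModule H.toGRVertexAlgebra W) :
    Submodule ℂ W where
  carrier := {w : W | ∀ n : ℤ, 0 < n → M.wmode H.a n w = 0}
  add_mem' := by
    intro w w' hw hw' n hn
    rw [M.wmode_add_right, hw n hn, hw' n hn, add_zero]
  zero_mem' := fun n _ => M.wmode_zero_right H.a n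
  smul_mem' := by
    intro c w hw n hn
    rw [M.wmode_smul_right, hw n hn, smul_zero]

end LBGModule
section AuxComb

open Finset

lemma cchoose_zero' (m : ℤ) : cchoose m 0 = 1 := by simp [cchoose]

lemma cfact_ne_zero (n : ℕ) : (n.factorial : ℂ) ≠ 0 := by
  exact_mod_cast Nat.cast_ne_zero.mpr (Nat.factorial_ne_zero n)

lemma cchoose_mul_cchoose (q : ℤ) {m t : ℕ} (h : m ≤ t) :
    cchoose q m * cchoose (q - m) (t - m) = cchoose q t * (t.choose m : ℂ) := by
  have hnum : (∏ i ∈ range t, ((q : ℂ) - i))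
      = (∏ i ∈ range m, ((q : ℂ) - i)) * ∏ i ∈ range (t - m), (((q - m : ℤ) : ℂ) - i) := by
    have h0 := Finset.prod_range_add (fun i => ((q : ℂ) - i)) m (t - m)
    rw [Nat.add_sub_cancel' h] at h0
    rw [h0]
    congr 1
    refine Finset.prod_congr rfl fun i _ => ?_
    push_cast
    ring
  have hfac : (t.factorial : ℂ) = (t.choose m : ℂ) * m.factorial * (t - m).factorial := by
    exact_mod_cast congrArg (fun x : ℕ => (x : ℂ)) (Nat.choose_mul_factorial_mul_factorial h).symm
  have hc : (t.choose m : ℂ) ≠ 0 := by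
    exact_mod_cast Nat.cast_ne_zero.mpr (Nat.choose_pos h).ne'
  unfold cchoose
  rw [div_mul_div_comm, ← hnum, hfac]
  rw [div_mul_eq_mul_div,
    div_eq_div_iff (mul_ne_zero (cfact_ne_zero m) (cfact_ne_zero (t - m)))
    (mul_ne_zero (mul_ne_zero hc (cfact_ne_zero m)) (cfact_ne_zero (t - m)))]
  ring

lemma alt_sum_choose (t : ℕ) :
    (∑ j ∈ range (t + 1), ((-1 : ℂ) ^ (t - j) * (t.choose j : ℂ))) =
      if t = 0 then 1 else 0 := by
  have key : ∀ j ∈ range (t + 1),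
      ((-1 : ℂ) ^ (t - j) * (t.choose j : ℂ))
        = (fun j => (-1 : ℂ) ^ j * (t.choose j : ℂ)) (t + 1 - 1 - j) := by
    intro j hj
    rw [mem_range, Nat.lt_succ_iff] at hj
    have h1 : t + 1 - 1 - j = t - j := by omega
    simp only [h1, Nat.choose_symm hj]
  rw [Finset.sum_congr rfl key,
    Finset.sum_range_reflect (fun j => (-1 : ℂ) ^ j * (t.choose j : ℂ)) (t + 1)]
  have h := Int.alternating_sum_range_choose (n := t)
  exact_mod_cast h

lemma finsum_nat_eq_sum {M : Type*} [AddCommMonoid M] (f : ℕ → M) (J : ℕ)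
    (h : ∀ j, J ≤ j → f j = 0) : (∑ᶠ j : ℕ, f j) = ∑ j ∈ range J, f j := by
  refine finsum_eq_finset_sum_of_support_subset f ?_
  intro j hj
  simp only [Function.mem_support] at hj
  simp only [coe_range, Set.mem_Iio]
  by_contra hc
  exact hj (h j (le_of_not_gt hc))

lemma neg_one_zpow_sub_eq_add (p : ℤ) (j : ℕ) :
    (-1 : ℂ) ^ (p - (j : ℤ)) = (-1 : ℂ) ^ (p + (j : ℤ)) := by
  have hne : (-1 : ℂ) ≠ 0 := by norm_num
  rw [zpow_sub₀ hne, zpow_add₀ hne, div_eq_iff (zpow_ne_zero _ hne), mul_assoc,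
    ← zpow_add₀ hne]
  have h2 : (j : ℤ) + (j : ℤ) = 2 * (j : ℤ) := by ring
  rw [h2, zpow_mul]
  norm_num

end AuxComb
lemma lmap_finsum {ι M N : Type*} [AddCommMonoid M] [AddCommMonoid N]
    [Module ℂ M] [Module ℂ N] (f : M →ₗ[ℂ] N) {g : ι → M}
    (hg : (Function.support g).Finite) : f (∑ᶠ i, g i) = ∑ᶠ i, f (g i) :=
  f.toAddMonoidHom.map_finsum hg

namespace GRVertexAlgebra

variable {V : Type} [AddCommGroup V] [Module ℂ V] (VA : GRVertexAlgebra V)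

lemma proj_homog_eq {α : ℤ} {v : V} (hv : VA.proj α v = v) (m : ℤ) :
    VA.proj m v = if m = α then v else 0 := by
  conv_lhs => rw [← hv]
  rw [VA.proj_idem]
  split_ifs <;> simp [hv]

lemma L0_homog {α : ℤ} {v : V} (hv : VA.proj α v = v) :
    (∑ᶠ m : ℤ, (m : ℂ) • VA.proj m v) = (α : ℂ) • v := by
  rw [finsum_eq_single _ α
    (fun m hm => by rw [VA.proj_homog_eq hv, if_neg hm, smul_zero]), hv]

lemma homog_of_L0 {μ : ℤ} {X : V} (h : (∑ᶠ m : ℤ, (m : ℂ) • VA.proj m X) = (μ : ℂ) • X) :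
    VA.proj μ X = X := by
  have hfin : (Function.support fun m : ℤ => (m : ℂ) • VA.proj m X).Finite :=
    (VA.proj_support_finite X).subset (by
      intro m hm
      simp only [Function.mem_support] at hm ⊢
      exact fun h0 => hm (by rw [h0, smul_zero]))
  have hproj : ∀ m' : ℤ, m' ≠ μ → VA.proj m' X = 0 := by
    intro m' hm'
    have h2 := congrArg (VA.proj m') h
    rw [map_smul, lmap_finsum (VA.proj m') hfin] at h2
    have h3 : (∑ᶠ m : ℤ, VA.proj m' ((m : ℂ) • VA.proj m X)) = (m' : ℂ) • VA.proj m' X := by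
      rw [finsum_eq_single _ m' ?_]
      · rw [map_smul, VA.proj_idem, if_pos rfl]
      · intro m hm
        rw [map_smul, VA.proj_idem, if_neg (Ne.symm hm), smul_zero]
    rw [h3] at h2
    have h4 : ((m' : ℂ) - μ) • VA.proj m' X = 0 := by rw [sub_smul, h2, sub_self]
    rcases smul_eq_zero.mp h4 with h5 | h5
    · exact absurd (by exact_mod_cast sub_eq_zero.mp h5) hm'
    · exact h5
  have h6 := VA.proj_sum X
  rwa [finsum_eq_single _ μ hproj] at h6

lemma mode_homog {α β : ℤ} {a b : V} (ha : VA.proj α a = a) (hb : VA.proj β b = b) (s : ℤ) :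
    VA.proj (α + β - s - 1) (VA.mode a s b) = VA.mode a s b := by
  apply VA.homog_of_L0
  have hbr := VA.L0_bracket a b s
  rw [VA.L0_homog hb, VA.mode_smul_right, VA.L0_homog ha, VA.mode_smul_left] at hbr
  rw [sub_eq_iff_eq_add] at hbr
  rw [hbr]
  push_cast
  module

lemma proj_mode_eq {α β : ℤ} {a b : V} (ha : VA.proj α a = a) (hb : VA.proj β b = b)
    (s m : ℤ) :
    VA.proj m (VA.mode a s b) = if m = α + β - s - 1 then VA.mode a s b else 0 :=
  VA.proj_homog_eq (VA.mode_homog ha hb s) m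

lemma Usingle_apply (v : V) (k l k' l' : ℕ) :
    (Usingle v k l).1 k' l' = if k' = k ∧ l' = l then v else 0 := rfl

lemma UInf_add_apply (A B : UInf V) (k l : ℕ) : (A + B).1 k l = A.1 k l + B.1 k l := rfl

lemma UInf_sub_apply (A B : UInf V) (k l : ℕ) : (A - B).1 k l = A.1 k l - B.1 k l := rfl

lemma UInf_smul_apply (c : ℂ) (A : UInf V) (k l : ℕ) : (c • A).1 k l = c • A.1 k l := rfl

lemma UInf_zero_apply (k l : ℕ) : (0 : UInf V).1 k l = 0 := rfl

lemma UInf_ext {A B : UInf V} (h : ∀ k l, A.1 k l = B.1 k l) : A = B :=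
  Subtype.ext (funext fun k => funext fun l => h k l)

/-- `Usingle` as a linear map. -/
def UsingleL (k l : ℕ) : V →ₗ[ℂ] UInf V where
  toFun v := Usingle v k l
  map_add' x y := by
    apply UInf_ext
    intro k' l'
    rw [UInf_add_apply, Usingle_apply, Usingle_apply, Usingle_apply]
    split_ifs <;> simp
  map_smul' c x := by
    apply UInf_ext
    intro k' l'
    rw [Usingle_apply, UInf_smul_apply, Usingle_apply]
    split_ifs <;> simp

lemma UsingleL_apply (v : V) (k l : ℕ) : UsingleL k l v = Usingle v k l := rfl

lemma udiamond_apply (A B : UInf V) (k l : ℕ) :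
    (VA.udiamond A B).1 k l = ∑ᶠ n : ℕ, VA.diamondEntry (A.1 k n) (B.1 n l) k n l := rfl

lemma udiamond_single (a b : V) (k N L : ℕ) :
    VA.udiamond (Usingle a k N) (Usingle b N L) = Usingle (VA.diamondEntry a b k N L) k L := by
  apply UInf_ext
  intro k' l'
  rw [udiamond_apply, Usingle_apply]
  by_cases h : k' = k ∧ l' = L
  · obtain ⟨hk, hl⟩ := h
    subst hk hl
    rw [if_pos ⟨rfl, rfl⟩]
    rw [finsum_eq_single _ N ?_]
    · rw [Usingle_apply, Usingle_apply, if_pos ⟨rfl, rfl⟩, if_pos ⟨rfl, rfl⟩]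
    · intro n hn
      rw [Usingle_apply, if_neg (fun hc => hn hc.2),
        VA.diamondEntry_zero_left]
  · rw [if_neg h]
    have hz : ∀ n : ℕ,
        VA.diamondEntry ((Usingle a k N).1 k' n) ((Usingle b N L).1 n l') k' n l' = 0 := by
      intro n
      rcases not_and_or.mp h with hk | hl
      · rw [Usingle_apply, if_neg (fun hc => hk hc.1), VA.diamondEntry_zero_left]
      · rw [Usingle_apply b N L n l', if_neg (fun hc => hl hc.2),
          VA.diamondEntry_zero_right]
    simp only [hz]
    exact finsum_zero

end GRVertexAlgebra
namespace GRVertexAlgebra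

variable {V : Type} [AddCommGroup V] [Module ℂ V] (VA : GRVertexAlgebra V)

lemma mode_support_finite (a b : V) (N : ℤ) (c : ℕ → ℂ) :
    (Function.support fun i : ℕ => c i • VA.mode a (N + i) b).Finite := by
  obtain ⟨N₀, hN₀⟩ := VA.lower_trunc a b
  refine Set.Finite.subset (Set.finite_Iio (N₀ - N).toNat) ?_
  intro i hi
  simp only [Function.mem_support] at hi
  simp only [Set.mem_Iio]
  by_contra hc
  push_neg at hc
  have hle : N₀ ≤ N + i := by
    have := Int.toNat_le.mp hc
    omega
  exact hi (by rw [hN₀ (N + i) hle, smul_zero])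

lemma resPow_homog {α : ℤ} {a : V} (ha : VA.proj α a = a) (N L : ℤ) (b : V) :
    VA.resPow N L a b = ∑ᶠ i : ℕ, cchoose (L + α) i • VA.mode a (N + i) b := by
  unfold GRVertexAlgebra.resPow
  rw [finsum_eq_single _ α ?_]
  · simp only [ha]
  · intro m hm
    have h0 : VA.proj m a = 0 := by rw [VA.proj_homog_eq ha, if_neg hm]
    simp only [h0, VA.mode_zero_left, smul_zero]
    exact finsum_zero

lemma resPow_outer_support (N L : ℤ) (a x : V) :
    (Function.support fun m : ℤ =>
      ∑ᶠ i : ℕ, cchoose (L + m) i • VA.mode (VA.proj m a) (N + i) x).Finite := by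
  refine (VA.proj_support_finite a).subset ?_
  intro m hm
  simp only [Function.mem_support] at hm ⊢
  intro h0
  apply hm
  simp only [h0, VA.mode_zero_left, smul_zero]
  exact finsum_zero

lemma resPow_add_right (N L : ℤ) (a x y : V) :
    VA.resPow N L a (x + y) = VA.resPow N L a x + VA.resPow N L a y := by
  unfold GRVertexAlgebra.resPow
  have inner : ∀ m : ℤ,
      (∑ᶠ i : ℕ, cchoose (L + m) i • VA.mode (VA.proj m a) (N + i) (x + y))
      = (∑ᶠ i : ℕ, cchoose (L + m) i • VA.mode (VA.proj m a) (N + i) x)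
        + (∑ᶠ i : ℕ, cchoose (L + m) i • VA.mode (VA.proj m a) (N + i) y) := by
    intro m
    rw [← finsum_add_distrib (VA.mode_support_finite (VA.proj m a) x N _)
      (VA.mode_support_finite (VA.proj m a) y N _)]
    exact finsum_congr fun i => by rw [VA.mode_add_right, smul_add]
  rw [finsum_congr inner,
    finsum_add_distrib (VA.resPow_outer_support N L a x) (VA.resPow_outer_support N L a y)]

lemma resPow_add_left (N L : ℤ) (x y a : V) :
    VA.resPow N L (x + y) a = VA.resPow N L x a + VA.resPow N L y a := by
  unfold GRVertexAlgebra.resPow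
  have inner : ∀ m : ℤ,
      (∑ᶠ i : ℕ, cchoose (L + m) i • VA.mode (VA.proj m (x + y)) (N + i) a)
      = (∑ᶠ i : ℕ, cchoose (L + m) i • VA.mode (VA.proj m x) (N + i) a)
        + (∑ᶠ i : ℕ, cchoose (L + m) i • VA.mode (VA.proj m y) (N + i) a) := by
    intro m
    rw [← finsum_add_distrib (VA.mode_support_finite (VA.proj m x) a N _)
      (VA.mode_support_finite (VA.proj m y) a N _)]
    exact finsum_congr fun i => by rw [map_add, VA.mode_add_left, smul_add]
  rw [finsum_congr inner,
    finsum_add_distrib (VA.resPow_outer_support N L x a) (VA.resPow_outer_support N L y a)]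

lemma diamondEntry_add_right (u x y : V) (k n l : ℕ) :
    VA.diamondEntry u (x + y) k n l
      = VA.diamondEntry u x k n l + VA.diamondEntry u y k n l := by
  unfold GRVertexAlgebra.diamondEntry
  rw [← Finset.sum_add_distrib]
  exact Finset.sum_congr rfl fun m _ => by rw [VA.resPow_add_right, smul_add]

lemma diamondEntry_add_left (x y u : V) (k n l : ℕ) :
    VA.diamondEntry (x + y) u k n l
      = VA.diamondEntry x u k n l + VA.diamondEntry y u k n l := by
  unfold GRVertexAlgebra.diamondEntry
  rw [← Finset.sum_add_distrib]
  exact Finset.sum_congr rfl fun m _ => by rw [VA.resPow_add_left, smul_add]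

lemma guard_support_finite {M : Type*} [AddCommMonoid M] (c : ℤ) (F : ℕ → M) :
    (Function.support fun j : ℕ => if (j : ℤ) ≤ c then F j else 0).Finite := by
  refine Set.Finite.subset (Set.finite_Iio (c.toNat + 1)) ?_
  intro j hj
  simp only [Function.mem_support] at hj
  simp only [Set.mem_Iio]
  by_contra hc
  push_neg at hc
  apply hj
  rw [if_neg ?_]
  have h1 : c.toNat + 1 ≤ j := hc
  have h2 : (c : ℤ) ≤ c.toNat := Int.self_le_toNat c
  push_neg
  have : (c.toNat : ℤ) + 1 ≤ (j : ℤ) := by exact_mod_cast h1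
  omega

lemma jEntry_add_left (u u' v : V) (wtv : ℤ) (k : ℕ) (l p n : ℤ) :
    VA.jEntry (u + u') v wtv k l p n
      = VA.jEntry u v wtv k l p n + VA.jEntry u' v wtv k l p n := by
  unfold GRVertexAlgebra.jEntry
  have h1 : (∑ᶠ j : ℕ, if (j : ℤ) ≤ n + p then
        ((-1 : ℂ) ^ (j : ℕ) * cchoose p j) •
          VA.diamondEntry v (u + u') k (n + p - j).toNat (l + p).toNat else 0)
      = (∑ᶠ j : ℕ, if (j : ℤ) ≤ n + p then
        ((-1 : ℂ) ^ (j : ℕ) * cchoose p j) •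
          VA.diamondEntry v u k (n + p - j).toNat (l + p).toNat else 0)
        + (∑ᶠ j : ℕ, if (j : ℤ) ≤ n + p then
        ((-1 : ℂ) ^ (j : ℕ) * cchoose p j) •
          VA.diamondEntry v u' k (n + p - j).toNat (l + p).toNat else 0) := by
    rw [← finsum_add_distrib (guard_support_finite _ _) (guard_support_finite _ _)]
    refine finsum_congr fun j => ?_
    split_ifs with hg
    · rw [VA.diamondEntry_add_right, smul_add]
    · rw [add_zero]
  have h2 : (∑ᶠ j : ℕ, if (j : ℤ) ≤ l - n + (k : ℤ) + p then
        ((-1 : ℂ) ^ ((p : ℤ) - (j : ℤ)) * cchoose p j) •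
          VA.diamondEntry (u + u') v k (l - n + (k : ℤ) + p - j).toNat (l + p).toNat else 0)
      = (∑ᶠ j : ℕ, if (j : ℤ) ≤ l - n + (k : ℤ) + p then
        ((-1 : ℂ) ^ ((p : ℤ) - (j : ℤ)) * cchoose p j) •
          VA.diamondEntry u v k (l - n + (k : ℤ) + p - j).toNat (l + p).toNat else 0)
        + (∑ᶠ j : ℕ, if (j : ℤ) ≤ l - n + (k : ℤ) + p then
        ((-1 : ℂ) ^ ((p : ℤ) - (j : ℤ)) * cchoose p j) •
          VA.diamondEntry u' v k (l - n + (k : ℤ) + p - j).toNat (l + p).toNat else 0) := by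
    rw [← finsum_add_distrib (guard_support_finite _ _) (guard_support_finite _ _)]
    refine finsum_congr fun j => ?_
    split_ifs with hg
    · rw [VA.diamondEntry_add_left, smul_add]
    · rw [add_zero]
  have h3 : (∑ᶠ j : ℕ, cchoose (wtv + n - (k : ℤ) - 1) j • VA.mode v (p + j) (u + u'))
      = (∑ᶠ j : ℕ, cchoose (wtv + n - (k : ℤ) - 1) j • VA.mode v (p + j) u)
        + (∑ᶠ j : ℕ, cchoose (wtv + n - (k : ℤ) - 1) j • VA.mode v (p + j) u') := by
    rw [← finsum_add_distrib (VA.mode_support_finite v u p _)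
      (VA.mode_support_finite v u' p _)]
    exact finsum_congr fun j => by rw [VA.mode_add_right, smul_add]
  rw [h1, h2, h3]
  abel

lemma jEntry_zero_left (v : V) (wtv : ℤ) (k : ℕ) (l p n : ℤ) :
    VA.jEntry 0 v wtv k l p n = 0 := by
  unfold GRVertexAlgebra.jEntry
  have e1 : ∀ j : ℕ, (if (j : ℤ) ≤ n + p then
      ((-1 : ℂ) ^ (j : ℕ) * cchoose p j) •
        VA.diamondEntry v 0 k (n + p - j).toNat (l + p).toNat else 0) = 0 := by
    intro j
    split_ifs
    · rw [VA.diamondEntry_zero_right, smul_zero]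
    · rfl
  have e2 : ∀ j : ℕ, (if (j : ℤ) ≤ l - n + (k : ℤ) + p then
      ((-1 : ℂ) ^ ((p : ℤ) - (j : ℤ)) * cchoose p j) •
        VA.diamondEntry 0 v k (l - n + (k : ℤ) + p - j).toNat (l + p).toNat else 0) = 0 := by
    intro j
    split_ifs
    · rw [VA.diamondEntry_zero_left, smul_zero]
    · rfl
  have e3 : ∀ j : ℕ, cchoose (wtv + n - (k : ℤ) - 1) j • VA.mode v (p + j) (0 : V) = 0 := by
    intro j
    rw [VA.mode_zero_right, smul_zero]
  simp only [e1, e2, e3, finsum_zero]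
  abel

/-- `jEntry` as an additive map in `u`. -/
def jEntryHom (v : V) (wtv : ℤ) (k : ℕ) (l p n : ℤ) : V →+ V where
  toFun u := VA.jEntry u v wtv k l p n
  map_zero' := VA.jEntry_zero_left v wtv k l p n
  map_add' x y := VA.jEntry_add_left x y v wtv k l p n

end GRVertexAlgebra
namespace LBGModule

open GRVertexAlgebra

variable {V : Type} [AddCommGroup V] [Module ℂ V] {VA : GRVertexAlgebra V}
variable {W : Type} [AddCommGroup W] [Module ℂ W] (M : LBGModule VA W)

/-- The action `Res_x x^{D} Y_W(x^{L(0)} ·, x) w`, with `D = l - k - 1`. -/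
def Fop (D : ℤ) (w : W) (X : V) : W := ∑ᶠ m : ℤ, M.wmode (VA.proj m X) (D + m) w

lemma wAct_eq_Fop (v : V) (k l : ℕ) (w : W) :
    M.wAct v k l w = M.Fop ((l : ℤ) - (k : ℤ) - 1) w v := rfl

lemma Fop_support_finite (D : ℤ) (w : W) (X : V) :
    (Function.support fun m : ℤ => M.wmode (VA.proj m X) (D + m) w).Finite := by
  refine (VA.proj_support_finite X).subset ?_
  intro m hm
  simp only [Function.mem_support] at hm ⊢
  intro h0
  exact hm (by rw [h0, M.wmode_zero_left])

lemma Fop_zero (D : ℤ) (w : W) : M.Fop D w 0 = 0 := by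
  unfold Fop
  simp only [map_zero, M.wmode_zero_left]
  exact finsum_zero

lemma Fop_add (D : ℤ) (w : W) (X Y : V) :
    M.Fop D w (X + Y) = M.Fop D w X + M.Fop D w Y := by
  unfold Fop
  rw [← finsum_add_distrib (M.Fop_support_finite D w X) (M.Fop_support_finite D w Y)]
  exact finsum_congr fun m => by rw [map_add, M.wmode_add_left]

/-- `Fop` as an additive map. -/
def FopHom (D : ℤ) (w : W) : V →+ W where
  toFun := M.Fop D w
  map_zero' := M.Fop_zero D w
  map_add' := M.Fop_add D w

lemma FopHom_apply (D : ℤ) (w : W) (X : V) : M.FopHom D w X = M.Fop D w X := rfl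

lemma Fop_smul (D : ℤ) (w : W) (c : ℂ) (X : V) :
    M.Fop D w (c • X) = c • M.Fop D w X := by
  calc M.Fop D w (c • X) = ∑ᶠ m : ℤ, c • M.wmode (VA.proj m X) (D + m) w :=
        finsum_congr fun m => by rw [map_smul, M.wmode_smul_left]
    _ = c • M.Fop D w X := (smul_finsum' c (M.Fop_support_finite D w X)).symm

lemma Fop_homog {μ : ℤ} {X : V} (hX : VA.proj μ X = X) (D : ℤ) (w : W) :
    M.Fop D w X = M.wmode X (D + μ) w := by
  unfold Fop
  rw [finsum_eq_single _ μ ?_]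
  · rw [hX]
  · intro m hm
    rw [VA.proj_homog_eq hX, if_neg hm, M.wmode_zero_left]

lemma omega_vanish {Λ : ℤ} {w : W} (hw : w ∈ M.OmegaSet Λ) {α : ℤ} {a : V}
    (ha : VA.proj α a = a) {s : ℤ} (hs : α - s - 1 < -Λ) : M.wmode a s w = 0 := by
  rw [← ha]
  exact hw α s a hs

lemma zero_mem_OmegaSet (Λ : ℤ) : (0 : W) ∈ M.OmegaSet Λ :=
  fun _ k v _ => M.wmode_zero_right _ _

lemma OmegaSet_mono {Λ Λ' : ℤ} (h : Λ ≤ Λ') : M.OmegaSet Λ ⊆ M.OmegaSet Λ' :=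
  fun _ hw m k v hlt => hw m k v (by omega)

lemma wmode_inner_support_finite (a b : V) (w : W) (nn : ℤ) (c : ℕ → ℂ) (e : ℕ → ℤ) :
    (Function.support fun i : ℕ => c i • M.wmode a (e i) (M.wmode b (nn + i) w)).Finite := by
  obtain ⟨N₀, hN₀⟩ := M.lower_trunc b w
  refine Set.Finite.subset (Set.finite_Iio (N₀ - nn).toNat) ?_
  intro i hi
  simp only [Function.mem_support] at hi
  simp only [Set.mem_Iio]
  by_contra hc
  push_neg at hc
  have hle : N₀ ≤ nn + i := by
    have := Int.toNat_le.mp hc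
    omega
  exact hi (by rw [hN₀ (nn + i) hle, M.wmode_zero_right, smul_zero])

end LBGModule
namespace LBGModule

open GRVertexAlgebra Finset

variable {V : Type} [AddCommGroup V] [Module ℂ V] {VA : GRVertexAlgebra V}
variable {W : Type} [AddCommGroup W] [Module ℂ W] (M : LBGModule VA W)

lemma Fop_diamondEntry {α β : ℤ} {a b : V} (ha : VA.proj α a = a) (hb : VA.proj β b = b)
    (k N L : ℕ) {w : W} (hw : w ∈ M.OmegaSet (L : ℤ)) :
    M.Fop ((L : ℤ) - (k : ℤ) - 1) w (VA.diamondEntry a b k N L)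
      = M.wmode a ((N : ℤ) - (k : ℤ) - 1 + α) (M.wmode b ((L : ℤ) - (N : ℤ) - 1 + β) w) := by
  set D : ℤ := (L : ℤ) - (k : ℤ) - 1 with hD
  set q : ℤ := -(k : ℤ) + (N : ℤ) - (L : ℤ) - 1 with hq
  have step1 : ∀ m : ℕ, m ≤ N →
      M.Fop D w (VA.resPow (-(k : ℤ) + (N : ℤ) - (L : ℤ) - (m : ℤ) - 1) L a b)
      = ∑ i ∈ range (N + 1 - m),
          ((-1 : ℂ) ^ (i : ℕ) * cchoose (q - (m : ℤ)) i) •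
            M.wmode a ((L : ℤ) + α + q - m - i)
              (M.wmode b ((β : ℤ) + L - N - 1 + ((m + i : ℕ) : ℤ)) w) := by
    intro m hm
    have hNm : (-(k : ℤ) + (N : ℤ) - (L : ℤ) - (m : ℤ) - 1) = q - (m : ℤ) := by
      rw [hq]; ring
    rw [hNm, VA.resPow_homog ha]
    rw [← M.FopHom_apply,
      (M.FopHom D w).map_finsum (VA.mode_support_finite a b (q - (m : ℤ)) _)]
    have e1 : ∀ i : ℕ,
        M.FopHom D w (cchoose ((L : ℤ) + α) i • VA.mode a (q - (m : ℤ) + i) b)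
        = cchoose ((L : ℤ) + α) i • M.wmode (VA.mode a (q - (m : ℤ) + i) b)
            ((L : ℤ) + α + ((β : ℤ) + L - N + m - 1) - i) w := by
      intro i
      rw [FopHom_apply, M.Fop_smul, M.Fop_homog (VA.mode_homog ha hb (q - (m : ℤ) + i))]
      congr 2
      rw [hD, hq]; push_cast; ring
    have hjac := M.jacobi a b w (q - (m : ℤ)) ((L : ℤ) + α) ((β : ℤ) + L - N + m - 1)
    have h2 : (∑ᶠ i : ℕ, ((-1 : ℂ) ^ (q - (m : ℤ) + (i : ℤ)) * cchoose (q - (m : ℤ)) i) •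
        M.wmode b (((β : ℤ) + L - N + m - 1) + (q - (m : ℤ)) - i)
          (M.wmode a (((L : ℤ) + α) + i) w)) = 0 := by
      have hz : ∀ i : ℕ, ((-1 : ℂ) ^ (q - (m : ℤ) + (i : ℤ)) * cchoose (q - (m : ℤ)) i) •
          M.wmode b (((β : ℤ) + L - N + m - 1) + (q - (m : ℤ)) - i)
            (M.wmode a (((L : ℤ) + α) + i) w) = 0 := by
        intro i
        rw [M.omega_vanish hw ha (show α - (((L : ℤ) + α) + (i : ℤ)) - 1 < -(L : ℤ) by omega),
          M.wmode_zero_right, smul_zero]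
      rw [finsum_congr hz]
      exact finsum_zero
    have hvan : ∀ i : ℕ, N + 1 - m ≤ i →
        ((-1 : ℂ) ^ (i : ℕ) * cchoose (q - (m : ℤ)) i) •
          M.wmode a (((L : ℤ) + α) + (q - (m : ℤ)) - i)
            (M.wmode b (((β : ℤ) + L - N + m - 1) + i) w) = 0 := by
      intro i hi
      rw [M.omega_vanish hw hb
        (show β - ((((β : ℤ) + L - N + m - 1)) + (i : ℤ)) - 1 < -(L : ℤ) by omega),
        M.wmode_zero_right, smul_zero]
    rw [finsum_congr e1, hjac, h2, sub_zero, finsum_nat_eq_sum _ (N + 1 - m) hvan]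
    refine sum_congr rfl fun i hi => ?_
    rw [show ((L : ℤ) + α) + (q - (m : ℤ)) - i = (L : ℤ) + α + q - m - i from by ring,
      show ((β : ℤ) + L - N + m - 1) + (i : ℤ) = (β : ℤ) + L - N - 1 + ((m + i : ℕ) : ℤ)
        from by push_cast; ring]
  -- assemble
  unfold GRVertexAlgebra.diamondEntry
  rw [← M.FopHom_apply, map_sum]
  have e2 : ∀ m ∈ range (N + 1),
      M.FopHom D w (cchoose (-(k : ℤ) + N - L - 1) m •
          VA.resPow (-(k : ℤ) + N - L - m - 1) L a b)
      = ∑ i ∈ range (N + 1 - m),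
          (cchoose q m * ((-1 : ℂ) ^ (i : ℕ) * cchoose (q - (m : ℤ)) i)) •
            M.wmode a ((L : ℤ) + α + q - m - i)
              (M.wmode b ((β : ℤ) + L - N - 1 + ((m + i : ℕ) : ℤ)) w) := by
    intro m hm
    rw [mem_range] at hm
    rw [FopHom_apply, M.Fop_smul, step1 m (by omega),
      show (-(k : ℤ) + N - L - 1) = q from rfl, Finset.smul_sum]
    exact sum_congr rfl fun i _ => by rw [smul_smul]
  rw [Finset.sum_congr rfl e2,
    ← Finset.sum_range_diag_flip (N + 1) (fun m i =>
      (cchoose q m * ((-1 : ℂ) ^ (i : ℕ) * cchoose (q - (m : ℤ)) i)) •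
        M.wmode a ((L : ℤ) + α + q - m - i)
          (M.wmode b ((β : ℤ) + L - N - 1 + ((m + i : ℕ) : ℤ)) w))]
  have e3 : ∀ t ∈ range (N + 1),
      (∑ j ∈ range (t + 1),
        (cchoose q j * ((-1 : ℂ) ^ (t - j : ℕ) * cchoose (q - (j : ℤ)) (t - j))) •
          M.wmode a ((L : ℤ) + α + q - j - ((t - j : ℕ) : ℤ))
            (M.wmode b ((β : ℤ) + L - N - 1 + ((j + (t - j) : ℕ) : ℤ)) w))
      = (if t = 0 then (1 : ℂ) else 0) •
          M.wmode a ((L : ℤ) + α + q - t) (M.wmode b ((β : ℤ) + L - N - 1 + (t : ℤ)) w) := by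
    intro t ht
    have e4 : ∀ j ∈ range (t + 1),
        (cchoose q j * ((-1 : ℂ) ^ (t - j : ℕ) * cchoose (q - (j : ℤ)) (t - j))) •
          M.wmode a ((L : ℤ) + α + q - j - ((t - j : ℕ) : ℤ))
            (M.wmode b ((β : ℤ) + L - N - 1 + ((j + (t - j) : ℕ) : ℤ)) w)
        = ((-1 : ℂ) ^ (t - j : ℕ) * (t.choose j : ℂ) * cchoose q t) •
            M.wmode a ((L : ℤ) + α + q - t)
              (M.wmode b ((β : ℤ) + L - N - 1 + (t : ℤ)) w) := by
      intro j hj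
      rw [mem_range, Nat.lt_succ_iff] at hj
      have hc1 : ((t - j : ℕ) : ℤ) = (t : ℤ) - j := by omega
      have hc2 : ((j + (t - j) : ℕ) : ℤ) = (t : ℤ) := by omega
      rw [hc1, hc2,
        show (L : ℤ) + α + q - j - ((t : ℤ) - j) = (L : ℤ) + α + q - t from by ring]
      congr 1
      have hcc := cchoose_mul_cchoose q hj
      linear_combination ((-1 : ℂ) ^ (t - j : ℕ)) * hcc
    rw [Finset.sum_congr rfl e4, ← Finset.sum_smul]
    congr 1
    have : (∑ j ∈ range (t + 1), (-1 : ℂ) ^ (t - j : ℕ) * (t.choose j : ℂ) * cchoose q t)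
        = (∑ j ∈ range (t + 1), (-1 : ℂ) ^ (t - j : ℕ) * (t.choose j : ℂ)) * cchoose q t := by
      rw [Finset.sum_mul]
    rw [this, alt_sum_choose t]
    split_ifs with h
    · subst h; rw [cchoose_zero', one_mul]
    · rw [zero_mul]
  rw [Finset.sum_congr rfl e3, Finset.sum_eq_single 0 ?_ ?_]
  · rw [if_pos rfl, one_smul]
    rw [show (L : ℤ) + α + q - ((0 : ℕ) : ℤ) = (N : ℤ) - (k : ℤ) - 1 + α from by
        rw [hq]; push_cast; ring,
      show (β : ℤ) + L - N - 1 + (((0 : ℕ)) : ℤ) = (L : ℤ) - (N : ℤ) - 1 + β from by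
        push_cast; ring]
  · intro t ht htne
    rw [if_neg htne, zero_smul]
  · intro h0
    exact absurd (mem_range.mpr (by omega)) h0

end LBGModule
namespace LBGModule

open GRVertexAlgebra Finset

variable {V : Type} [AddCommGroup V] [Module ℂ V] {VA : GRVertexAlgebra V}
variable {W : Type} [AddCommGroup W] [Module ℂ W] (M : LBGModule VA W)

lemma Fop_jEntry_homog {wtv wtu : ℤ} {v u : V} (hv : VA.proj wtv v = v)
    (hu : VA.proj wtu u = u) (k : ℕ) (l p n : ℤ) (hlp : 1 ≤ l + p) {w : W}
    (hw : w ∈ M.OmegaSet (l + p)) :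
    M.Fop (l + p - (k : ℤ) - 1) w (VA.jEntry u v wtv k l p n) = 0 := by
  have hL : (((l + p).toNat : ℕ) : ℤ) = l + p := Int.toNat_of_nonneg (by omega)
  have hw' : w ∈ M.OmegaSet (((l + p).toNat : ℕ) : ℤ) := by rw [hL]; exact hw
  rw [show l + p - (k : ℤ) - 1 = (((l + p).toNat : ℕ) : ℤ) - (k : ℤ) - 1 from by rw [hL]]
  set m₀ : ℤ := wtv + n - (k : ℤ) - 1 with hm₀
  set n₀ : ℤ := wtu + l - n - 1 with hn₀
  set D : ℤ := (((l + p).toNat : ℕ) : ℤ) - (k : ℤ) - 1 with hD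
  have hjac := M.jacobi v u w p m₀ n₀
  unfold GRVertexAlgebra.jEntry
  rw [← M.FopHom_apply, map_sub, map_sub]
  have H3 : M.FopHom D w (∑ᶠ j : ℕ, cchoose (wtv + n - (k : ℤ) - 1) j • VA.mode v (p + j) u)
      = ∑ᶠ i : ℕ, cchoose m₀ i • M.wmode (VA.mode v (p + i) u) (m₀ + n₀ - i) w := by
    rw [(M.FopHom D w).map_finsum (VA.mode_support_finite v u p _)]
    refine finsum_congr fun j => ?_
    rw [FopHom_apply, M.Fop_smul, M.Fop_homog (VA.mode_homog hv hu (p + j)), ← hm₀]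
    congr 2
    rw [hD, hm₀, hn₀, hL]; ring
  have H1 : M.FopHom D w (∑ᶠ j : ℕ, if (j : ℤ) ≤ n + p then
        ((-1 : ℂ) ^ (j : ℕ) * cchoose p j) •
          VA.diamondEntry v u k (n + p - j).toNat (l + p).toNat else 0)
      = ∑ᶠ i : ℕ, ((-1 : ℂ) ^ (i : ℕ) * cchoose p i) •
          M.wmode v (m₀ + p - i) (M.wmode u (n₀ + i) w) := by
    rw [(M.FopHom D w).map_finsum (guard_support_finite _ _)]
    have hE : (n + p : ℤ) ≤ ((n + p).toNat : ℤ) := Int.self_le_toNat _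
    rw [finsum_nat_eq_sum _ ((n + p).toNat + 1) (fun j hj => by
      rw [if_neg (show ¬((j : ℤ) ≤ n + p) by
        have : ((n + p).toNat : ℤ) + 1 ≤ (j : ℤ) := by exact_mod_cast hj
        omega), map_zero]),
      finsum_nat_eq_sum _ ((n + p).toNat + 1) (fun i hi => by
      have hgt : n + p < (i : ℤ) := by
        have : ((n + p).toNat : ℤ) + 1 ≤ (i : ℤ) := by exact_mod_cast hi
        omega
      rw [M.omega_vanish hw hu (show wtu - (n₀ + (i : ℤ)) - 1 < -(l + p) by
        rw [hn₀]; omega), M.wmode_zero_right, smul_zero])]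
    refine sum_congr rfl fun j hj => ?_
    by_cases hg : (j : ℤ) ≤ n + p
    · rw [if_pos hg, FopHom_apply, M.Fop_smul,
        M.Fop_diamondEntry hv hu k (n + p - j).toNat (l + p).toNat hw']
      have hNj : (((n + p - j).toNat : ℕ) : ℤ) = n + p - j := Int.toNat_of_nonneg (by omega)
      rw [hNj, hL,
        show n + p - (j : ℤ) - (k : ℤ) - 1 + wtv = m₀ + p - j from by rw [hm₀]; ring,
        show l + p - (n + p - (j : ℤ)) - 1 + wtu = n₀ + j from by rw [hn₀]; ring]
    · rw [if_neg hg, map_zero,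
        M.omega_vanish hw hu (show wtu - (n₀ + (j : ℤ)) - 1 < -(l + p) by
          rw [hn₀]; omega), M.wmode_zero_right, smul_zero]
  have H2 : M.FopHom D w (∑ᶠ j : ℕ, if (j : ℤ) ≤ l - n + (k : ℤ) + p then
        ((-1 : ℂ) ^ ((p : ℤ) - (j : ℤ)) * cchoose p j) •
          VA.diamondEntry u v k (l - n + (k : ℤ) + p - j).toNat (l + p).toNat else 0)
      = ∑ᶠ i : ℕ, ((-1 : ℂ) ^ (p + (i : ℤ)) * cchoose p i) •
          M.wmode u (n₀ + p - i) (M.wmode v (m₀ + i) w) := by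
    rw [(M.FopHom D w).map_finsum (guard_support_finite _ _)]
    have hE : (l - n + (k : ℤ) + p) ≤ ((l - n + (k : ℤ) + p).toNat : ℤ) := Int.self_le_toNat _
    rw [finsum_nat_eq_sum _ ((l - n + (k : ℤ) + p).toNat + 1) (fun j hj => by
      rw [if_neg (show ¬((j : ℤ) ≤ l - n + (k : ℤ) + p) by
        have : ((l - n + (k : ℤ) + p).toNat : ℤ) + 1 ≤ (j : ℤ) := by exact_mod_cast hj
        omega), map_zero]),
      finsum_nat_eq_sum _ ((l - n + (k : ℤ) + p).toNat + 1) (fun i hi => by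
      have hgt : l - n + (k : ℤ) + p < (i : ℤ) := by
        have : ((l - n + (k : ℤ) + p).toNat : ℤ) + 1 ≤ (i : ℤ) := by exact_mod_cast hi
        omega
      rw [M.omega_vanish hw hv (show wtv - (m₀ + (i : ℤ)) - 1 < -(l + p) by
        rw [hm₀]; omega), M.wmode_zero_right, smul_zero])]
    refine sum_congr rfl fun j hj => ?_
    by_cases hg : (j : ℤ) ≤ l - n + (k : ℤ) + p
    · rw [if_pos hg, FopHom_apply, M.Fop_smul,
        M.Fop_diamondEntry hu hv k (l - n + (k : ℤ) + p - j).toNat (l + p).toNat hw']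
      have hNj : (((l - n + (k : ℤ) + p - j).toNat : ℕ) : ℤ) = l - n + (k : ℤ) + p - j :=
        Int.toNat_of_nonneg (by omega)
      rw [hNj, hL, neg_one_zpow_sub_eq_add p j,
        show l - n + (k : ℤ) + p - (j : ℤ) - (k : ℤ) - 1 + wtu = n₀ + p - j from by
          rw [hn₀]; ring,
        show l + p - (l - n + (k : ℤ) + p - (j : ℤ)) - 1 + wtv = m₀ + j from by
          rw [hm₀]; ring]
    · rw [if_neg hg, map_zero,
        M.omega_vanish hw hv (show wtv - (m₀ + (j : ℤ)) - 1 < -(l + p) by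
          rw [hm₀]; omega), M.wmode_zero_right, smul_zero]
  rw [H1, H2, H3, hjac]
  abel

end LBGModule
namespace LBGModule

open GRVertexAlgebra Finset

variable {V : Type} [AddCommGroup V] [Module ℂ V] {VA : GRVertexAlgebra V}
variable {W : Type} [AddCommGroup W] [Module ℂ W] (M : LBGModule VA W)

lemma Fop_jEntry {wtv : ℤ} {v : V} (hv : VA.proj wtv v = v) (u : V)
    (k : ℕ) (l p n : ℤ) (hlp : 1 ≤ l + p) {w : W} (hw : w ∈ M.OmegaSet (l + p)) :
    M.Fop (l + p - (k : ℤ) - 1) w (VA.jEntry u v wtv k l p n) = 0 := by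
  classical
  have hS := VA.proj_support_finite u
  have hdecomp : u = ∑ m ∈ hS.toFinset, VA.proj m u := by
    rw [← finsum_eq_finset_sum_of_support_subset _ (by rw [hS.coe_toFinset]),
      VA.proj_sum]
  conv_lhs => rw [hdecomp]
  rw [show VA.jEntry (∑ m ∈ hS.toFinset, VA.proj m u) v wtv k l p n
      = ∑ m ∈ hS.toFinset, VA.jEntry (VA.proj m u) v wtv k l p n from
    map_sum (VA.jEntryHom v wtv k l p n) _ _]
  rw [← M.FopHom_apply, map_sum]
  refine Finset.sum_eq_zero fun m _ => ?_
  have hum : VA.proj m (VA.proj m u) = VA.proj m u := by rw [VA.proj_idem, if_pos rfl]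
  rw [FopHom_apply]
  exact M.Fop_jEntry_homog hv hum k l p n hlp hw

end LBGModule

namespace GRVertexAlgebra

open Finset

variable {V : Type} [AddCommGroup V] [Module ℂ V] (VA : GRVertexAlgebra V)

lemma Usingle_jEntry (u v : V) (wtv : ℤ) (k : ℕ) (l p n : ℤ) :
    Usingle (VA.jEntry u v wtv k l p n) k (l + p).toNat = VA.jElt u v wtv k l p n := by
  unfold GRVertexAlgebra.jEntry GRVertexAlgebra.jElt
  rw [← UsingleL_apply, map_sub, map_sub]
  congr 1
  congr 1
  · rw [lmap_finsum (UsingleL k (l + p).toNat) (guard_support_finite _ _)]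
    refine finsum_congr fun j => ?_
    split_ifs with hg
    · rw [map_smul, UsingleL_apply, ← VA.udiamond_single]
    · rw [map_zero]
  · rw [lmap_finsum (UsingleL k (l + p).toNat) (guard_support_finite _ _)]
    refine finsum_congr fun j => ?_
    split_ifs with hg
    · rw [map_smul, UsingleL_apply, ← VA.udiamond_single]
    · rw [map_zero]

lemma memQ_Usingle_jEntry {v : V} {wtv : ℤ} (hv : VA.proj wtv v = v) (u : V)
    (k : ℕ) (l p n : ℤ) (hlp : 1 ≤ l + p) (k₀ L₀ : ℕ)
    (hdiff : (L₀ : ℤ) - (k₀ : ℤ) = l + p - (k : ℤ)) (hΩ : (L₀ : ℤ) ≤ l + p) :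
    VA.memQ (Usingle (VA.jEntry u v wtv k l p n) k₀ L₀) := by
  intro W _ _ M n' k' w hw
  by_cases h : k' = k₀ ∧ n' = L₀
  · obtain ⟨hk', hn'⟩ := h
    subst hk' hn'
    rw [Usingle_apply, if_pos ⟨rfl, rfl⟩, M.wAct_eq_Fop]
    rw [show (n' : ℤ) - (k' : ℤ) - 1 = l + p - (k : ℤ) - 1 from by omega]
    rw [M.Fop_jEntry hv u k l p n hlp (M.OmegaSet_mono hΩ hw)]
    exact M.zero_mem_OmegaSet _
  · rw [Usingle_apply, if_neg h, M.wAct_eq_Fop, M.Fop_zero]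
    exact M.zero_mem_OmegaSet _

end GRVertexAlgebra

open GRVertexAlgebra in
/-- Let `V` be a grading-restricted vertex algebra, `u, v ∈ V` with `v` homogeneous of
weight `wtv`, `k ∈ ℕ` and `l, p, n ∈ ℤ` with `k ≥ 1` and `l + p ≥ 1`.  Let `w` be the
element `jEntry`, so that `[w]_{k,l+p}` is the corresponding generator of `J^∞(V)` and
lies in `Q^∞(V)`.  Then `[w]_{k-1,l+p-1} ∈ Q^∞(V)`; in particular these generators of
`J^∞(V)` satisfy the diagonal shift property. -/
theorem Jinf_diagonal_shift {V : Type} [AddCommGroup V] [Module ℂ V]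
    (VA : GRVertexAlgebra V) (u v : V) (wtv : ℤ) (hv : VA.proj wtv v = v)
    (k : ℕ) (l p n : ℤ) (hk : 1 ≤ k) (hlp : 1 ≤ l + p) :
    Usingle (VA.jEntry u v wtv k l p n) k (l + p).toNat = VA.jElt u v wtv k l p n ∧
    VA.memQ (Usingle (VA.jEntry u v wtv k l p n) k (l + p).toNat) ∧
    VA.memQ (Usingle (VA.jEntry u v wtv k l p n) (k - 1) (l + p - 1).toNat) := by
  refine ⟨VA.Usingle_jEntry u v wtv k l p n,
    VA.memQ_Usingle_jEntry hv u k l p n hlp k (l + p).toNat ?_ ?_,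
    VA.memQ_Usingle_jEntry hv u k l p n hlp (k - 1) (l + p - 1).toNat ?_ ?_⟩
  · have h1 : (((l + p).toNat : ℕ) : ℤ) = l + p := Int.toNat_of_nonneg (by omega)
    omega
  · have h1 : (((l + p).toNat : ℕ) : ℤ) = l + p := Int.toNat_of_nonneg (by omega)
    omega
  · have h2 : (((l + p - 1).toNat : ℕ) : ℤ) = l + p - 1 := Int.toNat_of_nonneg (by omega)
    have h3 : (((k - 1 : ℕ)) : ℤ) = (k : ℤ) - 1 := by omega
    omega
  · have h2 : (((l + p - 1).toNat : ℕ) : ℤ) = l + p - 1 := Int.toNat_of_nonneg (by omega)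
    omega
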